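/- Let 0 → E' → E → E'' → 0 be an exact sequence of X-filtered R-modules with both maps bicontrolled. If both E' and E'' are lean, then E is lean. -/

import Mathlib

open Metric Set

/-- The closed metric `r`-enlargement of a subset `S` of a metric space. -/
def enl {X : Type*} [PseudoMetricSpace X] (S : Set X) (r : ℝ) : Set X :=
  {x | ∃ s ∈ S, dist x s ≤ r}

section Defs

variable {X : Type*} [PseudoMetricSpace X] (R : Type*) [Ring R]

/-- An `X`-filtered `R`-module structure on `M`: a monotone assignment of submodules
with `F ∅ = ⊥` and `F X` being the whole module. -/
def IsXFiltration {M : Type*} [AddCommGroup M] [Module R M]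
    (F : Set X → Submodule R M) : Prop :=
  Monotone F ∧ F ∅ = ⊥ ∧ F Set.univ = ⊤

/-- `F` is `D`-lean: `F(S) ⊆ ∑_{x ∈ S} F(x[D])` for every `S ⊆ X`. -/
def IsLean {M : Type*} [AddCommGroup M] [Module R M]
    (F : Set X → Submodule R M) (D : ℝ) : Prop :=
  ∀ S : Set X, F S ≤ ⨆ x ∈ S, F (closedBall x D)

/-- `F` is `δ`-scattered: `F(X) ⊆ ∑_{x ∈ X} F(x[δ])`. -/
def IsScattered {M : Type*} [AddCommGroup M] [Module R M]
    (F : Set X → Submodule R M) (δ : ℝ) : Prop :=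
  F Set.univ ≤ ⨆ x : X, F (closedBall x δ)

/-- `F` is `d`-insular: `F(S) ∩ F(U) ⊆ F(S[d] ∩ U[d])` for all `S, U ⊆ X`. -/
def IsInsular {M : Type*} [AddCommGroup M] [Module R M]
    (F : Set X → Submodule R M) (d : ℝ) : Prop :=
  ∀ S U : Set X, F S ⊓ F U ≤ F (enl S d ∩ enl U d)

/-- `F` is locally finitely generated: `F(T)` is a finitely generated `R`-module
for every bounded `T ⊆ X`. -/
def IsLocallyFG {M : Type*} [AddCommGroup M] [Module R M]
    (F : Set X → Submodule R M) : Prop :=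
  ∀ T : Set X, Bornology.IsBounded T → (F T).FG

/-- `f` is `b`-bicontrolled: `f(F(S)) ⊆ G(S[b])` and `f(F(X)) ∩ G(S) ⊆ f(F(S[b]))`
for all `S ⊆ X`. -/
def IsBicontrolled {M N : Type*} [AddCommGroup M] [Module R M]
    [AddCommGroup N] [Module R N]
    (F : Set X → Submodule R M) (G : Set X → Submodule R N)
    (f : M →ₗ[R] N) (b : ℝ) : Prop :=
  (∀ S : Set X, (F S).map f ≤ G (enl S b)) ∧
  (∀ S : Set X, (F Set.univ).map f ⊓ G S ≤ (F (enl S b)).map f)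

end Defs

/-!
Given `u ∈ E(S)`, leanness of `E''` writes `g u` as a sum of elements of `E''(x[D''])` with
`x ∈ S[b]`, and bicontrol of `g` lifts each of them to `E(x[D'' + b])`; call the lift `u₀`.
Then `u - u₀` lies in `ker g = range f` and is controlled near `S`, so bicontrol of `f` pulls it
back to `E'` near `S`, where leanness of `E'` splits it into pieces supported on balls, which `f`
carries to balls of `E` around points of `S`. All radii stay bounded by `D' + D'' + 4b`.
-/

section Enlargement

variable {X : Type*} [PseudoMetricSpace X]

lemma subset_enl {S : Set X} {r : ℝ} (hr : 0 ≤ r) : S ⊆ enl S r :=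
  fun s hs => ⟨s, hs, by rwa [dist_self]⟩

lemma enl_enl_subset (S : Set X) (r t : ℝ) : enl (enl S r) t ⊆ enl S (r + t) := by
  rintro z ⟨w, ⟨s, hs, hws⟩, hzw⟩
  exact ⟨s, hs, (dist_triangle z w s).trans (by linarith)⟩

lemma enl_closedBall_subset (x : X) (r t : ℝ) : enl (closedBall x r) t ⊆ closedBall x (r + t) := by
  rintro z ⟨w, hw, hzw⟩
  rw [mem_closedBall] at hw ⊢
  exact (dist_triangle z w x).trans (by linarith)

lemma closedBall_subset_enl {S : Set X} {x : X} {r : ℝ} (hx : x ∈ enl S r) (t : ℝ) :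
    closedBall x t ⊆ enl S (t + r) := by
  obtain ⟨s, hs, hxs⟩ := hx
  intro z hz
  exact ⟨s, hs, (dist_triangle z x s).trans (by rw [mem_closedBall] at hz; linarith)⟩

end Enlargement

section Filtered

variable {X : Type*} [PseudoMetricSpace X] {R : Type*} [Ring R]
  {M N : Type*} [AddCommGroup M] [Module R M] [AddCommGroup N] [Module R N]
  {F : Set X → Submodule R M} {G : Set X → Submodule R N}

lemma iSup_closedBall_le_enl (hF : Monotone F) {S T : Set X} {r : ℝ} (hT : T ⊆ enl S r)
    (D : ℝ) : ⨆ x ∈ T, F (closedBall x D) ≤ F (enl S (D + r)) :=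
  iSup₂_le fun _ hx => hF (closedBall_subset_enl (hT hx) D)

lemma iSup_closedBall_le_iSup_closedBall (hF : Monotone F) {S T : Set X} {r D D₁ : ℝ}
    (hT : T ⊆ enl S r) (hD : D + r ≤ D₁) :
    ⨆ x ∈ T, F (closedBall x D) ≤ ⨆ s ∈ S, F (closedBall s D₁) := by
  refine iSup₂_le fun x hx => ?_
  obtain ⟨s, hs, hxs⟩ := hT hx
  refine (hF fun z hz => ?_).trans (le_iSup₂ (f := fun s _ => F (closedBall s D₁)) s hs)
  rw [mem_closedBall] at hz ⊢
  exact (dist_triangle z x s).trans (by linarith)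

namespace IsBicontrolled

variable {f : M →ₗ[R] N} {b : ℝ}

lemma range_inf_le_map (hf : IsBicontrolled R F G f b) (hF : F univ = ⊤) (S : Set X) :
    LinearMap.range f ⊓ G S ≤ (F (enl S b)).map f := by
  simpa only [hF, Submodule.map_top] using hf.2 S

lemma le_map (hf : IsBicontrolled R F G f b) (hF : F univ = ⊤)
    (hsurj : Function.Surjective f) (S : Set X) : G S ≤ (F (enl S b)).map f := by
  simpa only [LinearMap.range_eq_top.2 hsurj, top_inf_eq] using hf.range_inf_le_map hF S

lemma map_iSup_closedBall_le (hf : IsBicontrolled R F G f b) (hG : Monotone G)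
    (S : Set X) (D : ℝ) :
    (⨆ x ∈ S, F (closedBall x D)).map f ≤ ⨆ x ∈ S, G (closedBall x (D + b)) :=
  Submodule.map_le_iff_le_comap.2 <| iSup₂_le fun x hx => Submodule.map_le_iff_le_comap.1 <|
    (hf.1 _).trans <| (hG (enl_closedBall_subset x D b)).trans <|
      le_iSup₂ (f := fun x _ => G (closedBall x (D + b))) x hx

lemma le_map_iSup_closedBall (hf : IsBicontrolled R F G f b) (hFmono : Monotone F)
    (hF : F univ = ⊤) (hsurj : Function.Surjective f) {D : ℝ} (hG : IsLean R G D)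
    (S : Set X) : G S ≤ (⨆ x ∈ S, F (closedBall x (D + b))).map f :=
  (hG S).trans <| iSup₂_le fun x hx => (hf.le_map hF hsurj _).trans <| Submodule.map_mono <|
    (hFmono (enl_closedBall_subset x D b)).trans <|
      le_iSup₂ (f := fun x _ => F (closedBall x (D + b))) x hx

end IsBicontrolled

end Filtered

theorem lean_of_extension_general
    {X : Type*} [PseudoMetricSpace X] (R : Type*) [Ring R]
    {M' M M'' : Type*} [AddCommGroup M'] [Module R M'] [AddCommGroup M] [Module R M]
    [AddCommGroup M''] [Module R M'']
    (E' : Set X → Submodule R M') (E : Set X → Submodule R M)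
    (E'' : Set X → Submodule R M'') (f : M' →ₗ[R] M) (g : M →ₗ[R] M'')
    (hE' : IsXFiltration R E') (hE : IsXFiltration R E)
    (hsurj : Function.Surjective g)
    (hexact : LinearMap.range f = LinearMap.ker g)
    (b : ℝ) (hb : 0 ≤ b)
    (hf : IsBicontrolled R E' E f b) (hg : IsBicontrolled R E E'' g b)
    (D' D'' : ℝ) (hD' : 0 ≤ D') (hD'' : 0 ≤ D'')
    (hlean' : IsLean R E' D') (hlean'' : IsLean R E'' D'') :
    ∃ D : ℝ, 0 ≤ D ∧ IsLean R E D := by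
  refine ⟨D' + D'' + 4 * b, by positivity, fun S u hu => ?_⟩
  obtain ⟨u₀, hu₀, hgu₀⟩ :=
    hg.le_map_iSup_closedBall hE.1 hE.2.2 hsurj hlean'' (enl S b) (hg.1 S ⟨u, hu, rfl⟩)
  have hdiff : u - u₀ ∈ LinearMap.range f ⊓ E (enl S (D'' + b + b)) :=
    ⟨hexact ▸ LinearMap.mem_ker.2 (by rw [map_sub, hgu₀, sub_self]),
      sub_mem (hE.1 (subset_enl (by positivity)) hu)
        (iSup_closedBall_le_enl hE.1 subset_rfl _ hu₀)⟩
  obtain ⟨v, hv, hfv⟩ := hf.range_inf_le_map hE'.2.2 _ hdiff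
  have hdiff_balls := hf.map_iSup_closedBall_le hE.1 _ D' ⟨v, hlean' _ hv, rfl⟩
  rw [hfv] at hdiff_balls
  rw [← sub_add_cancel u u₀]
  refine add_mem (iSup_closedBall_le_iSup_closedBall hE.1 (enl_enl_subset _ _ _) ?_ hdiff_balls)
    (iSup_closedBall_le_iSup_closedBall hE.1 subset_rfl ?_ hu₀) <;> linarith

/-- in an exact sequence of `X`-filtered modules with bicontrolled maps,
if `E'` and `E''` are lean then `E` is lean. -/
theorem lean_of_extension
    {X : Type*} [PseudoMetricSpace X] (R : Type*) [Ring R]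
    {M' M M'' : Type*} [AddCommGroup M'] [Module R M'] [AddCommGroup M] [Module R M]
    [AddCommGroup M''] [Module R M'']
    (E' : Set X → Submodule R M') (E : Set X → Submodule R M)
    (E'' : Set X → Submodule R M'') (f : M' →ₗ[R] M) (g : M →ₗ[R] M'')
    (hE' : IsXFiltration R E') (hE : IsXFiltration R E) (hE'' : IsXFiltration R E'')
    (hinj : Function.Injective f) (hsurj : Function.Surjective g)
    (hexact : LinearMap.range f = LinearMap.ker g)
    (b : ℝ) (hb : 0 ≤ b)
    (hf : IsBicontrolled R E' E f b) (hg : IsBicontrolled R E E'' g b)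
    (D' D'' : ℝ) (hD' : 0 ≤ D') (hD'' : 0 ≤ D'')
    (hlean' : IsLean R E' D') (hlean'' : IsLean R E'' D'') :
    ∃ D : ℝ, 0 ≤ D ∧ IsLean R E D :=
  lean_of_extension_general R E' E E'' f g hE' hE hsurj hexact b hb hf hg D' D'' hD' hD'' hlean'
    hlean''
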